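/- arXiv:2511.06156 — 5 statements merged into one kernel-verified Lean document; each statement's English description precedes it below -/
import Mathlib

section
/- Let n be a positive integer, let r, κ ∈ ℝⁿ have positive entries, let e ∈ ℝⁿ satisfy e_i ≤ 0 for every i, and let E = diag(e) be the diagonal matrix with diagonal e. Let π^min ≤ π^max in ℝⁿ (componentwise). Define the profit P(π) = Σ_{i=1}^n (r_i·exp((Eπ)_i + π_i) − κ_i·exp((Eπ)_i)). Define π* ∈ ℝⁿ componentwise by: π*_i = clip(log((κ_i/r_i)·(e_i/(e_i+1))), π^min_i, π^max_i) if e_i < -1, and π*_i = π^max_i if -1 ≤ e_i ≤ 0, where clip(x, l, u) equals l if x < l, x if l ≤ x ≤ u, and u if x > u. Then π* maximizes P over the box {π ∈ ℝⁿ : π^min ≤ π ≤ π^max}: P(π) ≤ P(π*) for all π in the box. -/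
/-- `clip x l u` equals `l` if `x < l`, `x` if `l ≤ x ≤ u`, and `u` if `x > u`. -/
noncomputable def clip (x l u : ℝ) : ℝ :=
  if x < l then l else if x ≤ u then x else u

/-!
With `E = diag e` the profit is a sum of one-variable functions
`g y = r * exp ((e + 1) * y) - κ * exp (e * y)` with derivative
`exp (e * y) * (r * (e + 1) * exp y - κ * e)`. If `-1 ≤ e ≤ 0` this is nonnegative, so `g`
is monotone and the upper bound is optimal. If `e < -1` the bracket is decreasing in `y` and
vanishes at `m = log ((κ / r) * (e / (e + 1)))`, so `g` increases up to `m` and decreases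
afterwards; the best point of an interval is then the projection of `m` onto it.
-/

section

open Real Set

theorem le_apply_clip_of_monotoneOn_of_antitoneOn {f : ℝ → ℝ} {m l u x : ℝ}
    (hmono : MonotoneOn f (Iic m)) (hanti : AntitoneOn f (Ici m)) (hlx : l ≤ x) (hxu : x ≤ u) :
    f x ≤ f (clip m l u) := by
  unfold clip
  split_ifs with hml hmu
  · exact hanti hml.le (hml.trans_le hlx).le hlx
  · rcases le_total x m with hxm | hmx
    · exact hmono hxm self_mem_Iic hxm
    · exact hanti self_mem_Ici hmx hmx
  · have hum : u < m := not_le.mp hmu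
    exact hmono (hxu.trans hum.le) hum.le hxu

noncomputable def unitProfit (r κ e y : ℝ) : ℝ :=
  r * exp (e * y + y) - κ * exp (e * y)

noncomputable def unitProfitPeak (r κ e : ℝ) : ℝ :=
  log ((κ / r) * (e / (e + 1)))

variable {r κ e : ℝ}

theorem hasDerivAt_unitProfit (r κ e y : ℝ) :
    HasDerivAt (unitProfit r κ e) (exp (e * y) * (r * (e + 1) * exp y - κ * e)) y := by
  have hlin : HasDerivAt (fun y : ℝ => e * y) e y := by
    simpa using (hasDerivAt_id y).const_mul e
  refine (((hlin.add (hasDerivAt_id' y)).exp.const_mul r).sub (hlin.exp.const_mul κ)).congr_deriv ?_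
  simp only [Pi.add_apply, exp_add]
  ring

theorem differentiable_unitProfit (r κ e : ℝ) : Differentiable ℝ (unitProfit r κ e) :=
  fun y => (hasDerivAt_unitProfit r κ e y).differentiableAt

theorem monotone_unitProfit (hr : 0 ≤ r) (hκ : 0 ≤ κ) (he₁ : -1 ≤ e) (he₀ : e ≤ 0) :
    Monotone (unitProfit r κ e) := by
  refine monotone_of_deriv_nonneg (differentiable_unitProfit r κ e) fun y => ?_
  rw [(hasDerivAt_unitProfit r κ e y).deriv]
  have hgain : 0 ≤ r * (e + 1) * exp y := by
    have := exp_pos y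
    have : 0 ≤ e + 1 := by linarith
    positivity
  have hloss : 0 ≤ -(κ * e) := by nlinarith
  exact mul_nonneg (exp_pos _).le (by linarith)

theorem deriv_unitProfit_eq_of_lt_neg_one (hr : 0 < r) (hκ : 0 < κ) (he : e < -1) (y : ℝ) :
    deriv (unitProfit r κ e) y =
      exp (e * y) * (r * (e + 1)) * (exp y - exp (unitProfitPeak r κ e)) := by
  have hpos : 0 < (κ / r) * (e / (e + 1)) :=
    mul_pos (div_pos hκ hr) (div_pos_of_neg_of_neg (by linarith) (by linarith))
  have he₁ : e + 1 ≠ 0 := by linarith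
  rw [(hasDerivAt_unitProfit r κ e y).deriv, unitProfitPeak, exp_log hpos]
  field_simp

theorem monotoneOn_unitProfit_Iic (hr : 0 < r) (hκ : 0 < κ) (he : e < -1) :
    MonotoneOn (unitProfit r κ e) (Iic (unitProfitPeak r κ e)) := by
  refine monotoneOn_of_deriv_nonneg (convex_Iic _)
    (differentiable_unitProfit r κ e).continuous.continuousOn
    (differentiable_unitProfit r κ e).differentiableOn fun y hy => ?_
  rw [interior_Iic] at hy
  rw [deriv_unitProfit_eq_of_lt_neg_one hr hκ he]
  have hslope : r * (e + 1) < 0 := mul_neg_of_pos_of_neg hr (by linarith)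
  have hbelow : exp y - exp (unitProfitPeak r κ e) < 0 := sub_neg.mpr (exp_lt_exp.mpr hy)
  exact mul_nonneg_of_nonpos_of_nonpos
    (mul_nonpos_of_nonneg_of_nonpos (exp_pos _).le hslope.le) hbelow.le

theorem antitoneOn_unitProfit_Ici (hr : 0 < r) (hκ : 0 < κ) (he : e < -1) :
    AntitoneOn (unitProfit r κ e) (Ici (unitProfitPeak r κ e)) := by
  refine antitoneOn_of_deriv_nonpos (convex_Ici _)
    (differentiable_unitProfit r κ e).continuous.continuousOn
    (differentiable_unitProfit r κ e).differentiableOn fun y hy => ?_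
  rw [interior_Ici] at hy
  rw [deriv_unitProfit_eq_of_lt_neg_one hr hκ he]
  have hslope : r * (e + 1) < 0 := mul_neg_of_pos_of_neg hr (by linarith)
  have habove : 0 < exp y - exp (unitProfitPeak r κ e) := sub_pos.mpr (exp_lt_exp.mpr hy)
  exact mul_nonpos_of_nonpos_of_nonneg
    (mul_nonpos_of_nonneg_of_nonpos (exp_pos _).le hslope.le) habove.le

theorem unitProfit_le_of_mem_Icc {l u x : ℝ} (hr : 0 < r) (hκ : 0 < κ) (he : e ≤ 0)
    (hlx : l ≤ x) (hxu : x ≤ u) :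
    unitProfit r κ e x ≤
      unitProfit r κ e (if e < -1 then clip (unitProfitPeak r κ e) l u else u) := by
  split_ifs with he₁
  · exact le_apply_clip_of_monotoneOn_of_antitoneOn (monotoneOn_unitProfit_Iic hr hκ he₁)
      (antitoneOn_unitProfit_Ici hr hκ he₁) hlx hxu
  · exact monotone_unitProfit hr.le hκ.le (not_lt.mp he₁) he hxu

end

theorem diagonal_elasticity_box_optimum_general
    (n : ℕ) (r κ e πmin πmax : Fin n → ℝ)
    (hr : ∀ i, 0 < r i) (hκ : ∀ i, 0 < κ i) (he : ∀ i, e i ≤ 0)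
    (E : Matrix (Fin n) (Fin n) ℝ) (hE : E = Matrix.diagonal e)
    (P : (Fin n → ℝ) → ℝ)
    (hP : ∀ π : Fin n → ℝ,
      P π = ∑ i, (r i * Real.exp (E.mulVec π i + π i)
                    - κ i * Real.exp (E.mulVec π i)))
    (πstar : Fin n → ℝ)
    (hπstar : ∀ i, πstar i =
      if e i < -1 then
        clip (Real.log ((κ i / r i) * (e i / (e i + 1)))) (πmin i) (πmax i)
      else πmax i) :
    ∀ π : Fin n → ℝ, (∀ i, πmin i ≤ π i ∧ π i ≤ πmax i) → P π ≤ P πstar := by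
  intro π hπ
  simp only [hP, hE, Matrix.mulVec_diagonal]
  refine Finset.sum_le_sum fun i _ => ?_
  rw [hπstar i]
  exact unitProfit_le_of_mem_Icc (hr i) (hκ i) (he i) (hπ i).1 (hπ i).2

/-- Diagonal-elasticity product pricing problem with box constraints: with
`E = diag e`, `e i ≤ 0`, the profit
`P π = ∑ i, (r i * exp ((E π) i + π i) - κ i * exp ((E π) i))`
is maximized over the box `{π : πmin ≤ π ≤ πmax}` by the componentwise clipped
analytic solution `πstar`. -/
theorem diagonal_elasticity_box_optimum
    (n : ℕ) (hn : 0 < n) (r κ e πmin πmax : Fin n → ℝ)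
    (hr : ∀ i, 0 < r i) (hκ : ∀ i, 0 < κ i) (he : ∀ i, e i ≤ 0)
    (hbox : ∀ i, πmin i ≤ πmax i)
    (E : Matrix (Fin n) (Fin n) ℝ) (hE : E = Matrix.diagonal e)
    (P : (Fin n → ℝ) → ℝ)
    (hP : ∀ π : Fin n → ℝ,
      P π = ∑ i, (r i * Real.exp (E.mulVec π i + π i)
                    - κ i * Real.exp (E.mulVec π i)))
    (πstar : Fin n → ℝ)
    (hπstar : ∀ i, πstar i =
      if e i < -1 then
        clip (Real.log ((κ i / r i) * (e i / (e i + 1)))) (πmin i) (πmax i)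
      else πmax i) :
    ∀ π : Fin n → ℝ, (∀ i, πmin i ≤ π i ∧ π i ≤ πmax i) → P π ≤ P πstar :=
  diagonal_elasticity_box_optimum_general n r κ e πmin πmax hr hκ he E hE P hP πstar hπstar
end

section
/- The function h : ℝ → ℝ defined by h(t) = (exp(t) − 1 − t)/t² for t ≠ 0 and h(0) = 1/2 is strictly monotone increasing on ℝ. -/
/-!
The function is the integral form of the Taylor remainder of `exp` at order two:
`h t = ∫ s in 0..1, (1 - s) * exp (s * t)`, including at `t = 0`, where the integral is `1/2`.
For `s ∈ (0, 1)` the integrand is strictly increasing in `t`, hence so is `h`.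
-/

open Real intervalIntegral

theorem integral_one_sub_mul_exp_mul {t : ℝ} (ht : t ≠ 0) :
    ∫ s in (0 : ℝ)..1, (1 - s) * exp (s * t) = (exp t - 1 - t) / t ^ 2 := by
  have hderiv : ∀ s ∈ Set.uIcc (0 : ℝ) 1,
      HasDerivAt (fun s => ((1 - s) / t + 1 / t ^ 2) * exp (s * t)) ((1 - s) * exp (s * t)) s := by
    intro s _
    have := ((((hasDerivAt_id' s).const_sub 1).div_const t).add_const (1 / t ^ 2)).mul
      (hasDerivAt_mul_const t).exp
    exact this.congr_deriv (by field_simp; ring)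
  rw [integral_eq_sub_of_hasDerivAt hderiv ((by fun_prop : Continuous _).intervalIntegrable 0 1)]
  field_simp
  simp only [sub_self, zero_mul, zero_add, one_mul, sub_zero, mul_one, mul_zero, exp_zero]
  ring

theorem integral_one_sub_mul_exp_mul_zero : ∫ s in (0 : ℝ)..1, (1 - s) * exp (s * 0) = 1 / 2 := by
  simp only [mul_zero, exp_zero, mul_one]
  rw [integral_sub intervalIntegrable_const intervalIntegrable_id]
  norm_num

theorem strictMono_integral_one_sub_mul_exp_mul :
    StrictMono fun t => ∫ s in (0 : ℝ)..1, (1 - s) * exp (s * t) := by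
  intro a b hab
  have hint (c : ℝ) : IntervalIntegrable (fun s => (1 - s) * exp (s * c)) MeasureTheory.volume 0 1 :=
    (by fun_prop : Continuous _).intervalIntegrable 0 1
  rw [← sub_pos, ← integral_sub (hint b) (hint a)]
  refine intervalIntegral_pos_of_pos_on ((hint b).sub (hint a)) (fun s hs => ?_) zero_lt_one
  have hexp : exp (s * a) < exp (s * b) := exp_lt_exp.2 (mul_lt_mul_of_pos_left hab hs.1)
  nlinarith [hs.2]

/-- The function `h t = (exp t - 1 - t) / t²` for `t ≠ 0`, with `h 0 = 1/2`,
is strictly monotone increasing on `ℝ`. -/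
theorem exp_quadratic_coefficient_strictMono
    (h : ℝ → ℝ)
    (hh : ∀ t : ℝ, t ≠ 0 → h t = (Real.exp t - 1 - t) / t ^ 2)
    (h0 : h 0 = 1 / 2) :
    StrictMono h := by
  have h_eq : h = fun t => ∫ s in (0 : ℝ)..1, (1 - s) * exp (s * t) := by
    funext t
    rcases eq_or_ne t 0 with rfl | ht
    · rw [h0, integral_one_sub_mul_exp_mul_zero]
    · rw [hh t ht, integral_one_sub_mul_exp_mul ht]
  exact h_eq ▸ strictMono_integral_one_sub_mul_exp_mul
end

section
/- Let δ̂ ∈ ℝ, let b > 0, and set β = (exp(b) − b − 1)/b². Then for every δ ∈ ℝ with δ ≤ δ̂ + b, exp(δ) ≤ exp(δ̂)·(1 + (δ − δ̂) + β·(δ − δ̂)²), with equality when δ = δ̂ and when δ = δ̂ + b. -/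
/-!
Writing `t = δ - δ̂` and factoring out `exp δ̂`, the claim becomes `exp t ≤ 1 + t + β t²` for
`t ≤ b`. For `t > 0` this says that `(exp t - 1 - t) / t² = ∑ tⁿ / (n + 2)!` is at most its value
`β` at `b`, which holds because this series is increasing on `[0, ∞)`. For `t ≤ 0` it follows from
`exp t ≤ 1 + t + t² / 2` and `β ≥ 1 / 2`.
-/

open Real Nat

lemma summable_pow_div_factorial_add_two (x : ℝ) :
    Summable fun n : ℕ => x ^ n / (n + 2)! := by
  refine (summable_pow_div_factorial |x|).of_norm_bounded fun n => ?_
  rw [norm_div, norm_pow, Real.norm_eq_abs, Real.norm_of_nonneg (by positivity)]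
  gcongr
  omega

lemma exp_sub_one_sub_eq_sq_mul_tsum (x : ℝ) :
    exp x - 1 - x = x ^ 2 * ∑' n : ℕ, x ^ n / (n + 2)! := by
  have hexp := (hasSum_nat_add_iff' 2).mpr (exp_eq_exp_ℝ ▸ NormedSpace.expSeries_div_hasSum_exp x)
  have hterm : (fun n : ℕ => x ^ (n + 2) / (n + 2)!) = fun n => x ^ 2 * (x ^ n / (n + 2)!) := by
    funext n
    ring
  have hhead : ∑ i ∈ Finset.range 2, x ^ i / (i ! : ℝ) = 1 + x := by
    simp [Finset.sum_range_succ]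
  rw [hterm, hhead, ← sub_sub] at hexp
  exact hexp.unique ((summable_pow_div_factorial_add_two x).hasSum.mul_left _)

lemma monotoneOn_tsum_pow_div_factorial_add_two :
    MonotoneOn (fun x : ℝ => ∑' n : ℕ, x ^ n / (n + 2)!) (Set.Ici 0) := by
  intro s hs t _ hst
  refine (summable_pow_div_factorial_add_two s).tsum_le_tsum (fun n => ?_)
    (summable_pow_div_factorial_add_two t)
  gcongr

lemma exp_le_one_add_add_sq_div_two_of_nonpos {x : ℝ} (hx : x ≤ 0) :
    exp x ≤ 1 + x + x ^ 2 / 2 := by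
  have hpos : 0 ≤ 1 + x + x ^ 2 / 2 := by nlinarith [sq_nonneg (x + 1)]
  calc exp x ≤ exp x * ((1 + x + x ^ 2 / 2) * (1 + -x + (-x) ^ 2 / 2)) := by
        refine le_mul_of_one_le_right (exp_pos x).le ?_
        -- the product is `1 + x ^ 4 / 4`
        nlinarith [pow_two_nonneg (x ^ 2)]
    _ ≤ exp x * ((1 + x + x ^ 2 / 2) * exp (-x)) := by
        gcongr
        exact quadratic_le_exp_of_nonneg (neg_nonneg.mpr hx)
    _ = 1 + x + x ^ 2 / 2 := by
        rw [mul_left_comm, ← exp_add, add_neg_cancel, exp_zero, mul_one]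

lemma exp_le_one_add_add_mul_sq {b t : ℝ} (hb : 0 < b) (htb : t ≤ b) :
    exp t ≤ 1 + t + (exp b - b - 1) / b ^ 2 * t ^ 2 := by
  rcases le_or_gt t 0 with ht | ht
  · have hhalf : 1 / 2 ≤ (exp b - b - 1) / b ^ 2 := by
      rw [le_div_iff₀ (by positivity)]
      linarith [quadratic_le_exp_of_nonneg hb.le]
    nlinarith [exp_le_one_add_add_sq_div_two_of_nonpos ht, sq_nonneg t]
  · have hmono := monotoneOn_tsum_pow_div_factorial_add_two (Set.mem_Ici.2 ht.le)
      (Set.mem_Ici.2 hb.le) htb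
    have hb' : (exp b - b - 1) / b ^ 2 = ∑' n : ℕ, b ^ n / (n + 2)! := by
      rw [div_eq_iff (by positivity), sub_right_comm, exp_sub_one_sub_eq_sq_mul_tsum, mul_comm]
    rw [hb']
    nlinarith [exp_sub_one_sub_eq_sq_mul_tsum t, mul_le_mul_of_nonneg_left hmono (sq_nonneg t)]

/-- The QMM quadratic majorizer: for `b > 0` and `β = (exp b - b - 1)/b²`,
`exp δ ≤ exp δ̂ * (1 + (δ - δ̂) + β * (δ - δ̂)²)` for all `δ ≤ δ̂ + b`,
with equality at `δ = δ̂` and at `δ = δ̂ + b`. -/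
theorem qmm_quadratic_majorizer
    (δhat b β : ℝ) (hb : 0 < b)
    (hβ : β = (Real.exp b - b - 1) / b ^ 2) :
    (∀ δ : ℝ, δ ≤ δhat + b →
      Real.exp δ ≤ Real.exp δhat * (1 + (δ - δhat) + β * (δ - δhat) ^ 2)) ∧
    (∀ δ : ℝ, δ = δhat ∨ δ = δhat + b →
      Real.exp δ = Real.exp δhat * (1 + (δ - δhat) + β * (δ - δhat) ^ 2)) := by
  subst hβ
  refine ⟨fun δ hδ => ?_, ?_⟩
  · calc exp δ = exp δhat * exp (δ - δhat) := by rw [← exp_add, add_sub_cancel]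
      _ ≤ _ := by
        gcongr
        exact exp_le_one_add_add_mul_sq hb (by linarith)
  · rintro δ (rfl | rfl)
    · simp
    · rw [add_sub_cancel_left, div_mul_cancel₀ _ (by positivity), exp_add]
      ring
end

section
/- Let δ̂ ∈ ℝ, let b > 0, and set β = (exp(b) − b − 1)/b². If β' ∈ ℝ satisfies exp(δ) ≤ exp(δ̂)·(1 + (δ − δ̂) + β'·(δ − δ̂)²) for every δ ≤ δ̂ + b, then β' ≥ β. That is, β is the smallest coefficient for which the quadratic majorization of exp on (−∞, δ̂ + b] holds. -/
/-- Minimality of the QMM majorizer coefficient: if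
`exp δ ≤ exp δ̂ * (1 + (δ - δ̂) + β' * (δ - δ̂)²)` holds for every `δ ≤ δ̂ + b`,
then `β' ≥ β = (exp b - b - 1)/b²`. -/
theorem qmm_quadratic_majorizer_minimal
    (δhat b β : ℝ) (hb : 0 < b)
    (hβ : β = (Real.exp b - b - 1) / b ^ 2)
    (β' : ℝ)
    (hmaj : ∀ δ : ℝ, δ ≤ δhat + b →
      Real.exp δ ≤ Real.exp δhat * (1 + (δ - δhat) + β' * (δ - δhat) ^ 2)) :
    β ≤ β' := by
  have hend := hmaj (δhat + b) le_rfl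
  rw [add_sub_cancel_left, Real.exp_add, mul_le_mul_iff_right₀ (Real.exp_pos δhat)] at hend
  rw [hβ, div_le_iff₀ (by positivity)]
  linarith
end

section
/- Let n be a positive integer, let r, κ ∈ ℝⁿ have nonnegative entries, let E ∈ ℝ^{n×n}, and define the profit P(π) = Σ_{i=1}^n (r_i·exp((Eπ)_i + π_i) − κ_i·exp((Eπ)_i)). Let S ⊆ ℝⁿ and δ^max ∈ ℝⁿ with Eπ ≤ δ^max componentwise for all π ∈ S. Let π̂ ∈ S with b_i = δ^max_i − (Eπ̂)_i > 0 for all i, set β_i = (exp(b_i) − b_i − 1)/b_i², define the QMM surrogate Q(π) = Σ_{i=1}^n (r_i·exp((Eπ̂)_i + π̂_i)·(1 + (Eπ)_i + π_i − (Eπ̂)_i − π̂_i) − κ_i·exp((Eπ̂)_i)·(1 + ((Eπ)_i − (Eπ̂)_i) + β_i·((Eπ)_i − (Eπ̂)_i)²)), and suppose π⁺ ∈ S maximizes Q over S. Then P(π⁺) ≥ P(π̂); that is, the profit does not decrease at a QMM iteration. -/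
/-!
Since `exp` lies above its tangent lines, the revenue part of `Q` minorizes that of `P`.
For the cost part one needs `exp u ≤ 1 + u + β u²` for every `u ≤ b`, where
`β = (exp b - b - 1) / b²`; this holds because `(exp u - u - 1) / u²` is nondecreasing in `u`:
for `u ≥ 0` its power series `∑ uⁿ / (n + 2)!` has nonnegative coefficients, and for `u ≤ 0`
it stays below `1/2`. The feasibility constraint `Eπ ≤ δmax` gives exactly
`u = (Eπ - Eπ̂)ᵢ ≤ bᵢ`. Hence `Q ≤ P` on `S`, with equality at `π̂`, and
`P π̂ = Q π̂ ≤ Q π⁺ ≤ P π⁺`.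
-/

namespace Real

theorem hasSum_exp_sub_sub_one (x : ℝ) :
    HasSum (fun n : ℕ => x ^ (n + 2) / (n + 2).factorial) (exp x - x - 1) := by
  have h := (hasSum_nat_add_iff' 2).mpr (NormedSpace.expSeries_div_hasSum_exp x)
  have h2 : ∑ i ∈ Finset.range 2, x ^ i / i.factorial = x + 1 := by
    simp [Finset.sum_range_succ, add_comm]
  rwa [h2, ← sub_sub, ← exp_eq_exp_ℝ] at h

theorem sq_mul_exp_sub_sub_one_le {u b : ℝ} (hu : 0 ≤ u) (hub : u ≤ b) :
    b ^ 2 * (exp u - u - 1) ≤ u ^ 2 * (exp b - b - 1) := by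
  refine hasSum_le (fun n => ?_) ((hasSum_exp_sub_sub_one u).mul_left _)
    ((hasSum_exp_sub_sub_one b).mul_left _)
  rw [mul_div_assoc', mul_div_assoc']
  gcongr ?_ / _
  calc b ^ 2 * u ^ (n + 2) = u ^ 2 * b ^ 2 * u ^ n := by ring
    _ ≤ u ^ 2 * b ^ 2 * b ^ n := by gcongr
    _ = u ^ 2 * b ^ (n + 2) := by ring

theorem exp_le_one_add_add_sq_div_two {u : ℝ} (hu : u ≤ 0) :
    exp u ≤ 1 + u + u ^ 2 / 2 := by
  have hquad := quadratic_le_exp_of_nonneg (neg_nonneg.2 hu)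
  have hinv : exp u * exp (-u) = 1 := by rw [← exp_add, add_neg_cancel, exp_zero]
  -- `(1 + u + u²/2) (1 - u + u²/2) = 1 + u⁴/4` and both factors are positive
  nlinarith [sq_nonneg (u ^ 2), sq_nonneg (u + 1), exp_pos u]

theorem exp_le_one_add_add_mul_sq {u b : ℝ} (hb : 0 < b) (hub : u ≤ b) :
    exp u ≤ 1 + u + (exp b - b - 1) / b ^ 2 * u ^ 2 := by
  have hb2 : 0 < b ^ 2 := by positivity
  suffices b ^ 2 * (exp u - u - 1) ≤ (exp b - b - 1) * u ^ 2 by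
    rw [div_mul_eq_mul_div, ← sub_le_iff_le_add', ← sub_sub, le_div_iff₀ hb2]
    linarith
  rcases le_total u 0 with hu | hu
  · have half_le : b ^ 2 / 2 ≤ exp b - b - 1 := by linarith [quadratic_le_exp_of_nonneg hb.le]
    have := exp_le_one_add_add_sq_div_two hu
    nlinarith [sq_nonneg u]
  · linarith [sq_mul_exp_sub_sub_one_le hu hub]

theorem mul_exp_mul_one_add_sub_le {c : ℝ} (hc : 0 ≤ c) (a x : ℝ) :
    c * exp a * (1 + (x - a)) ≤ c * exp x := by
  calc c * exp a * (1 + (x - a)) ≤ c * exp a * exp (x - a) := by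
        gcongr; linarith [add_one_le_exp (x - a)]
    _ = c * exp x := by rw [mul_assoc, ← exp_add, add_sub_cancel]

theorem mul_exp_le_mul_exp_mul_quadratic {c b : ℝ} (hc : 0 ≤ c) (hb : 0 < b) {a x : ℝ}
    (hxa : x - a ≤ b) :
    c * exp x ≤ c * exp a * (1 + (x - a) + (exp b - b - 1) / b ^ 2 * (x - a) ^ 2) := by
  calc c * exp x = c * exp a * exp (x - a) := by rw [mul_assoc, ← exp_add, add_sub_cancel]
    _ ≤ _ := by gcongr; exact exp_le_one_add_add_mul_sq hb hxa

end Real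

theorem qmm_iteration_monotone_general
    (n : ℕ) (r κ : Fin n → ℝ)
    (hr : ∀ i, 0 ≤ r i) (hκ : ∀ i, 0 ≤ κ i)
    (E : Matrix (Fin n) (Fin n) ℝ)
    (P : (Fin n → ℝ) → ℝ)
    (hP : ∀ π : Fin n → ℝ,
      P π = ∑ i, (r i * Real.exp (E.mulVec π i + π i)
                    - κ i * Real.exp (E.mulVec π i)))
    (S : Set (Fin n → ℝ)) (δmax : Fin n → ℝ)
    (hS : ∀ π ∈ S, ∀ i, E.mulVec π i ≤ δmax i)
    (πhat : Fin n → ℝ) (hπhat : πhat ∈ S)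
    (b : Fin n → ℝ) (hb : ∀ i, b i = δmax i - E.mulVec πhat i)
    (hbpos : ∀ i, 0 < b i)
    (β : Fin n → ℝ) (hβ : ∀ i, β i = (Real.exp (b i) - b i - 1) / (b i) ^ 2)
    (Q : (Fin n → ℝ) → ℝ)
    (hQ : ∀ π : Fin n → ℝ,
      Q π = ∑ i, (r i * Real.exp (E.mulVec πhat i + πhat i) *
                    (1 + E.mulVec π i + π i - E.mulVec πhat i - πhat i)
                  - κ i * Real.exp (E.mulVec πhat i) *
                    (1 + (E.mulVec π i - E.mulVec πhat i)
                       + β i * (E.mulVec π i - E.mulVec πhat i) ^ 2)))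
    (πplus : Fin n → ℝ) (hπplus : πplus ∈ S)
    (hmax : ∀ π ∈ S, Q π ≤ Q πplus) :
    P πhat ≤ P πplus := by
  have tight : Q πhat = P πhat := by
    rw [hQ, hP]
    exact Finset.sum_congr rfl fun i _ => by ring
  have minorizes : Q πplus ≤ P πplus := by
    rw [hQ, hP]
    refine Finset.sum_le_sum fun i _ => sub_le_sub ?_ ?_
    · refine Eq.trans_le ?_ (Real.mul_exp_mul_one_add_sub_le (hr i)
        (E.mulVec πhat i + πhat i) (E.mulVec πplus i + πplus i))
      ring
    · rw [hβ i]
      refine Real.mul_exp_le_mul_exp_mul_quadratic (hκ i) (hbpos i) ?_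
      linarith [hS πplus hπplus i, hb i]
  calc P πhat = Q πhat := tight.symm
    _ ≤ Q πplus := hmax πhat hπhat
    _ ≤ P πplus := minorizes

/-- A QMM iteration does not decrease the profit: if `π⁺` maximizes the QMM
surrogate `Q` over the feasible set `S` (on which `Eπ ≤ δmax` componentwise),
then `P π⁺ ≥ P π̂`. -/
theorem qmm_iteration_monotone
    (n : ℕ) (hn : 0 < n) (r κ : Fin n → ℝ)
    (hr : ∀ i, 0 ≤ r i) (hκ : ∀ i, 0 ≤ κ i)
    (E : Matrix (Fin n) (Fin n) ℝ)
    (P : (Fin n → ℝ) → ℝ)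
    (hP : ∀ π : Fin n → ℝ,
      P π = ∑ i, (r i * Real.exp (E.mulVec π i + π i)
                    - κ i * Real.exp (E.mulVec π i)))
    (S : Set (Fin n → ℝ)) (δmax : Fin n → ℝ)
    (hS : ∀ π ∈ S, ∀ i, E.mulVec π i ≤ δmax i)
    (πhat : Fin n → ℝ) (hπhat : πhat ∈ S)
    (b : Fin n → ℝ) (hb : ∀ i, b i = δmax i - E.mulVec πhat i)
    (hbpos : ∀ i, 0 < b i)
    (β : Fin n → ℝ) (hβ : ∀ i, β i = (Real.exp (b i) - b i - 1) / (b i) ^ 2)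
    (Q : (Fin n → ℝ) → ℝ)
    (hQ : ∀ π : Fin n → ℝ,
      Q π = ∑ i, (r i * Real.exp (E.mulVec πhat i + πhat i) *
                    (1 + E.mulVec π i + π i - E.mulVec πhat i - πhat i)
                  - κ i * Real.exp (E.mulVec πhat i) *
                    (1 + (E.mulVec π i - E.mulVec πhat i)
                       + β i * (E.mulVec π i - E.mulVec πhat i) ^ 2)))
    (πplus : Fin n → ℝ) (hπplus : πplus ∈ S)
    (hmax : ∀ π ∈ S, Q π ≤ Q πplus) :
    P πhat ≤ P πplus :=
  qmm_iteration_monotone_general n r κ hr hκ E P hP S δmax hS πhat hπhat b hb hbpos β hβ Q hQ πplus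
    hπplus hmax
end
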